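/- arXiv:2110.07807 — 2 statements merged into one kernel-verified Lean document; each statement's English description precedes it below -/
import Mathlib

section
/- Let ℓ : ℝ^d → ℝ be convex and L-Lipschitz, and let f₁,…,f_d : ℝ^{m×p} → ℝ each be differentiable with gradient Lipschitz constant C/b. Define ℓ∘f(θ) = ℓ(f₁(θ[1]),…,f_d(θ[d])) for θ = (θ[1],…,θ[d]). Then for all θ, θ' with ‖θ − θ'‖_F ≤ 2R, we have ℓ(f(θ')) − ℓ(f(θ)) ≥ ⟨∇_θ ℓ(f(θ)), θ'−θ⟩ − 2CLR²/b, i.e. ℓ∘f is (2CLR²/b)-nearly convex on the ball B(R). -/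
/-!
Convexity of `ℓ` gives `ℓ(f(θ')) - ℓ(f(θ)) ≥ ⟪∇ℓ, f(θ') - f(θ)⟫`. By the descent lemma each
`f_i(θ'[i]) - f_i(θ[i])` is its linearisation `⟪∇f_i(θ[i]), θ'[i] - θ[i]⟫` up to an error of size
at most `(C/2b)‖θ'[i] - θ[i]‖²`, and each coordinate of `∇ℓ` is bounded by `L`, so the total
error is at most `(CL/2b)‖θ' - θ‖_F² ≤ 2CLR²/b`.
-/

open scoped RealInnerProductSpace
open AffineMap Set

section Gradient

variable {E : Type*} [NormedAddCommGroup E] [InnerProductSpace ℝ E] [CompleteSpace E]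

theorem HasGradientAt.hasDerivAt_comp_lineMap {f : E → ℝ} {g x y : E} {t : ℝ}
    (hf : HasGradientAt f g (lineMap x y t)) :
    HasDerivAt (fun s : ℝ => f (lineMap x y s)) ⟪g, y - x⟫ t :=
  (hasGradientAt_iff_hasFDerivAt.1 hf).comp_hasDerivAt t hasDerivAt_lineMap

theorem ConvexOn.add_inner_sub_le_of_hasGradientAt {s : Set E} {f : E → ℝ} {g x y : E}
    (hconv : ConvexOn ℝ s f) (hx : x ∈ s) (hy : y ∈ s) (hf : HasGradientAt f g x) :
    f x + ⟪g, y - x⟫ ≤ f y := by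
  have hline : ConvexOn ℝ (lineMap x y ⁻¹' s) (fun t : ℝ => f (lineMap x y t)) :=
    hconv.comp_affineMap (lineMap x y)
  have hderiv : HasDerivAt (fun t : ℝ => f (lineMap x y t)) ⟪g, y - x⟫ 0 :=
    HasGradientAt.hasDerivAt_comp_lineMap (by simpa using hf)
  have := hline.le_slope_of_hasDerivAt (by simpa using hx) (by simpa using hy) zero_lt_one hderiv
  simp only [slope, lineMap_apply_one, lineMap_apply_zero, sub_zero, inv_one, one_smul,
    vsub_eq_sub] at this
  linarith

theorem abs_sub_sub_inner_le_of_lipschitz_gradient {f : E → ℝ} {gf : E → E} {K : ℝ}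
    (hgf : ∀ y, HasGradientAt f (gf y) y) (hlip : ∀ y y', ‖gf y - gf y'‖ ≤ K * ‖y - y'‖)
    (x y : E) :
    |f y - f x - ⟪gf x, y - x⟫| ≤ K / 2 * ‖y - x‖ ^ 2 := by
  set r : ℝ → ℝ := fun t => f (lineMap x y t) - f x - t * ⟪gf x, y - x⟫
  have hr : ∀ t, HasDerivAt r (⟪gf (lineMap x y t), y - x⟫ - ⟪gf x, y - x⟫) t := fun t =>
    (((hgf _).hasDerivAt_comp_lineMap).sub_const (f x)).sub
      (hasDerivAt_mul_const _)
  have hB : ∀ t, HasDerivAt (fun t : ℝ => K / 2 * ‖y - x‖ ^ 2 * t ^ 2) (K * ‖y - x‖ ^ 2 * t) t :=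
    fun t => ((hasDerivAt_pow 2 t).const_mul _).congr_deriv (by norm_num; ring)
  have hbound : ∀ t ∈ Ico (0 : ℝ) 1,
      ‖⟪gf (lineMap x y t), y - x⟫ - ⟪gf x, y - x⟫‖ ≤ K * ‖y - x‖ ^ 2 * t := by
    rintro t ⟨ht0, -⟩
    rw [← inner_sub_left]
    calc ‖⟪gf (lineMap x y t) - gf x, y - x⟫‖
        ≤ ‖gf (lineMap x y t) - gf x‖ * ‖y - x‖ := norm_inner_le_norm _ _
      _ ≤ K * ‖lineMap x y t - x‖ * ‖y - x‖ := by gcongr; exact hlip _ _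
      _ = K * ‖y - x‖ ^ 2 * t := by
        rw [← dist_eq_norm, dist_lineMap_left, dist_eq_norm', Real.norm_of_nonneg ht0]; ring
  have := image_norm_le_of_norm_deriv_right_le_deriv_boundary
    (fun t _ => (hr t).continuousAt.continuousWithinAt) (fun t _ => (hr t).hasDerivWithinAt)
    (by simp [r]) hB hbound (right_mem_Icc.2 zero_le_one)
  simpa [r] using this

theorem HasGradientAt.norm_le_of_lip' {f : E → ℝ} {g x : E} {L : ℝ} (hf : HasGradientAt f g x)
    (hL : 0 ≤ L) (hlip : ∀ᶠ y in nhds x, |f y - f x| ≤ L * ‖y - x‖) : ‖g‖ ≤ L := by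
  simpa using (hasGradientAt_iff_hasFDerivAt.1 hf).le_of_lip' hL hlip

variable {ι : Type*} [Fintype ι]

theorem ConvexOn.sum_mul_inner_sub_le_comp_pi_sub {ℓ : EuclideanSpace ℝ ι → ℝ}
    (hconv : ConvexOn ℝ univ ℓ) {f : ι → E → ℝ} {gf : ι → E → E} {K : ℝ}
    (hgf : ∀ i y, HasGradientAt (f i) (gf i y) y)
    (hgflip : ∀ i y y', ‖gf i y - gf i y'‖ ≤ K * ‖y - y'‖) (θ θ' : ι → E)
    {g : EuclideanSpace ℝ ι} (hg : HasGradientAt ℓ g (WithLp.toLp 2 fun i => f i (θ i)))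
    {L : ℝ} (hgL : ‖g‖ ≤ L) :
    ∑ i, g i * ⟪gf i (θ i), θ' i - θ i⟫ - L * (K / 2) * ∑ i, ‖θ' i - θ i‖ ^ 2 ≤
      ℓ (WithLp.toLp 2 fun i => f i (θ' i)) - ℓ (WithLp.toLp 2 fun i => f i (θ i)) := by
  have hconvex := hconv.add_inner_sub_le_of_hasGradientAt (mem_univ _)
    (mem_univ (WithLp.toLp 2 fun i => f i (θ' i))) hg
  have hinner : ⟪g, (WithLp.toLp 2 fun i => f i (θ' i)) - WithLp.toLp 2 fun i => f i (θ i)⟫ =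
      ∑ i, g i * (f i (θ' i) - f i (θ i)) := by
    simp [PiLp.inner_apply, mul_comm]
  have hterm : ∀ i, g i * ⟪gf i (θ i), θ' i - θ i⟫ - L * (K / 2 * ‖θ' i - θ i‖ ^ 2) ≤
      g i * (f i (θ' i) - f i (θ i)) := fun i => by
    have hgi : |g i| ≤ L := (PiLp.norm_apply_le g i).trans hgL
    have herr : |g i * (f i (θ' i) - f i (θ i) - ⟪gf i (θ i), θ' i - θ i⟫)| ≤
        L * (K / 2 * ‖θ' i - θ i‖ ^ 2) := by
      rw [abs_mul]
      exact mul_le_mul hgi (abs_sub_sub_inner_le_of_lipschitz_gradient (hgf i) (hgflip i) _ _)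
        (abs_nonneg _) ((norm_nonneg g).trans hgL)
    linarith [neg_abs_le (g i * (f i (θ' i) - f i (θ i) - ⟪gf i (θ i), θ' i - θ i⟫))]
  have := Finset.sum_le_sum fun i (_ : i ∈ Finset.univ) => hterm i
  rw [Finset.sum_sub_distrib, ← Finset.mul_sum, ← Finset.mul_sum, ← mul_assoc] at this
  linarith

end Gradient

theorem stmt_5_general {d m p : ℕ} (L C b R : ℝ) (hL : 0 ≤ L) (hC : 0 ≤ C)
    (hb : 0 < b)
    (ℓ : EuclideanSpace ℝ (Fin d) → ℝ)
    (hconv : ConvexOn ℝ Set.univ ℓ)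
    (hlip : ∀ x y, |ℓ x - ℓ y| ≤ L * ‖x - y‖)
    (gℓ : EuclideanSpace ℝ (Fin d) → EuclideanSpace ℝ (Fin d))
    (hgℓ : ∀ y, HasGradientAt ℓ (gℓ y) y)
    (f : Fin d → EuclideanSpace ℝ (Fin m × Fin p) → ℝ)
    (gf : Fin d → EuclideanSpace ℝ (Fin m × Fin p) → EuclideanSpace ℝ (Fin m × Fin p))
    (hgf : ∀ i y, HasGradientAt (f i) (gf i y) y)
    (hgflip : ∀ i y y', ‖gf i y - gf i y'‖ ≤ (C / b) * ‖y - y'‖)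
    (θ θ' : Fin d → EuclideanSpace ℝ (Fin m × Fin p))
    (hdist : Real.sqrt (∑ i, ‖θ i - θ' i‖ ^ 2) ≤ 2 * R) :
    ℓ (WithLp.toLp 2 (fun i => f i (θ' i))) - ℓ (WithLp.toLp 2 (fun i => f i (θ i))) ≥
      (∑ i, (gℓ (WithLp.toLp 2 (fun j => f j (θ j)))) i * ⟪gf i (θ i), θ' i - θ i⟫) -
        2 * C * L * R ^ 2 / b := by
  have hgL := (hgℓ (WithLp.toLp 2 fun j => f j (θ j))).norm_le_of_lip' hL
    (Filter.Eventually.of_forall fun y => hlip y _)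
  have hnear := hconv.sum_mul_inner_sub_le_comp_pi_sub hgf hgflip θ θ' (hgℓ _) hgL
  obtain ⟨-, hsq⟩ := Real.sqrt_le_iff.1 hdist
  have herror : L * (C / b / 2) * ∑ i, ‖θ' i - θ i‖ ^ 2 ≤ 2 * C * L * R ^ 2 / b := by
    simp_rw [norm_sub_rev (θ' _)]
    calc L * (C / b / 2) * ∑ i, ‖θ i - θ' i‖ ^ 2 ≤ L * (C / b / 2) * (2 * R) ^ 2 := by
          gcongr
      _ = 2 * C * L * R ^ 2 / b := by field_simp
  linarith

/-- a convex `L`-Lipschitz loss composed with coordinatewise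
predictors having `(C/b)`-Lipschitz gradients is `(2CLR²/b)`-nearly convex on a
set of (Frobenius) diameter `2R`.  The gradient of the composition has block `i`
equal to `(∂ℓ/∂f_i) • ∇f_i(θ[i])`. -/
theorem stmt_5 {d m p : ℕ} (L C b R : ℝ) (hL : 0 ≤ L) (hC : 0 ≤ C)
    (hb : 0 < b) (hR : 0 ≤ R)
    (ℓ : EuclideanSpace ℝ (Fin d) → ℝ)
    (hconv : ConvexOn ℝ Set.univ ℓ)
    (hlip : ∀ x y, |ℓ x - ℓ y| ≤ L * ‖x - y‖)
    (gℓ : EuclideanSpace ℝ (Fin d) → EuclideanSpace ℝ (Fin d))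
    (hgℓ : ∀ y, HasGradientAt ℓ (gℓ y) y)
    (f : Fin d → EuclideanSpace ℝ (Fin m × Fin p) → ℝ)
    (gf : Fin d → EuclideanSpace ℝ (Fin m × Fin p) → EuclideanSpace ℝ (Fin m × Fin p))
    (hgf : ∀ i y, HasGradientAt (f i) (gf i y) y)
    (hgflip : ∀ i y y', ‖gf i y - gf i y'‖ ≤ (C / b) * ‖y - y'‖)
    (θ θ' : Fin d → EuclideanSpace ℝ (Fin m × Fin p))
    (hdist : Real.sqrt (∑ i, ‖θ i - θ' i‖ ^ 2) ≤ 2 * R) :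
    ℓ (WithLp.toLp 2 (fun i => f i (θ' i))) - ℓ (WithLp.toLp 2 (fun i => f i (θ i))) ≥
      (∑ i, (gℓ (WithLp.toLp 2 (fun j => f j (θ j)))) i * ⟪gf i (θ i), θ' i - θ i⟫) -
        2 * C * L * R ^ 2 / b :=
  stmt_5_general L C b R hL hC hb ℓ hconv hlip gℓ hgℓ f gf hgf hgflip θ θ' hdist
end

section
/- Under the setup of the preceding construction, if additionally σ' is C-Lipschitz, ‖x‖₂ = 1, and ‖c_r‖₂ ≤ 2D/m for all r, then |f(θ*; x) − g₁(x)| ≤ bCD²/(2m), where g₁(x) = Σ_{r=1}^{m/2} c_r^⊤x σ'((θ₁[r])^⊤x) and θ*[r] = θ₁[r] + (b/2)c_r a_r, θ̄*[r] = θ₁[r] − (b/2)c_r a_r. -/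
open scoped RealInnerProductSpace BigOperators

open intervalIntegral

lemma key_taylor_nonneg (C : ℝ) (hC : 0 ≤ C) (σ : ℝ → ℝ) (hdiff : ∀ z, DifferentiableAt ℝ σ z)
    (hσ : ∀ z z', |deriv σ z - deriv σ z'| ≤ C * |z - z'|) (u h : ℝ) (hh : 0 ≤ h) :
    |σ (u + h) - σ (u - h) - 2 * h * deriv σ u| ≤ C * h ^ 2 := by
  have hlip : LipschitzWith (Real.toNNReal C) (deriv σ) := by
    apply LipschitzWith.of_dist_le_mul
    intro z z'
    rw [Real.dist_eq, Real.dist_eq]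
    simpa [Real.coe_toNNReal C hC] using hσ z z'
  have hcont : Continuous (deriv σ) := hlip.continuous
  have hint : IntervalIntegrable (deriv σ) MeasureTheory.volume (u - h) (u + h) :=
    hcont.intervalIntegrable _ _
  have h1 : ∫ t in (u - h)..(u + h), deriv σ t = σ (u + h) - σ (u - h) :=
    integral_deriv_eq_sub (fun t _ => hdiff t) hint
  have h2 : ∫ t in (u - h)..(u + h), deriv σ u = 2 * h * deriv σ u := by
    rw [integral_const, smul_eq_mul]; ring
  have hint2 : IntervalIntegrable (fun _ => deriv σ u) MeasureTheory.volume (u - h) (u + h) :=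
    intervalIntegrable_const
  have h3 : σ (u + h) - σ (u - h) - 2 * h * deriv σ u
      = ∫ t in (u - h)..(u + h), (deriv σ t - deriv σ u) := by
    rw [integral_sub hint hint2, h1, h2]
  have hab : u - h ≤ u + h := by linarith
  have habs : (∫ t in (u - h)..(u + h), |t - u|) = h ^ 2 := by
    rw [intervalIntegral.integral_comp_sub_right (fun s => |s|) u]
    have e1 : u - h - u = -h := by ring
    have e2 : u + h - u = h := by ring
    rw [e1, e2]
    have i1 : IntervalIntegrable (fun s : ℝ => |s|) MeasureTheory.volume (-h) 0 :=
      (continuous_abs).intervalIntegrable _ _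
    have i2 : IntervalIntegrable (fun s : ℝ => |s|) MeasureTheory.volume 0 h :=
      (continuous_abs).intervalIntegrable _ _
    rw [← integral_add_adjacent_intervals i1 i2]
    have c1 : (∫ s in (-h)..(0:ℝ), |s|) = ∫ s in (-h)..(0:ℝ), -s := by
      apply integral_congr
      intro s hs
      rw [Set.uIcc_of_le (by linarith : -h ≤ 0)] at hs
      exact abs_of_nonpos hs.2
    have c2 : (∫ s in (0:ℝ)..h, |s|) = ∫ s in (0:ℝ)..h, s := by
      apply integral_congr
      intro s hs
      rw [Set.uIcc_of_le hh] at hs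
      exact abs_of_nonneg hs.1
    rw [c1, c2, intervalIntegral.integral_neg, integral_id, integral_id]
    ring
  rw [h3]
  calc |∫ t in (u - h)..(u + h), (deriv σ t - deriv σ u)|
      ≤ ∫ t in (u - h)..(u + h), |deriv σ t - deriv σ u| := by
        simpa [Real.norm_eq_abs] using
          intervalIntegral.norm_integral_le_integral_norm (f := fun t => deriv σ t - deriv σ u)
            (μ := MeasureTheory.volume) (a := u - h) (b := u + h) hab
    _ ≤ ∫ t in (u - h)..(u + h), C * |t - u| := by
        apply integral_mono_on hab
        · exact ((hcont.sub continuous_const).abs).intervalIntegrable _ _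
        · exact (continuous_const.mul ((continuous_id.sub continuous_const).abs)).intervalIntegrable _ _
        · intro t _; exact hσ t u
    _ = C * h ^ 2 := by rw [integral_const_mul, habs]

lemma key_taylor (C : ℝ) (hC : 0 ≤ C) (σ : ℝ → ℝ) (hdiff : ∀ z, DifferentiableAt ℝ σ z)
    (hσ : ∀ z z', |deriv σ z - deriv σ z'| ≤ C * |z - z'|) (u h : ℝ) :
    |σ (u + h) - σ (u - h) - 2 * h * deriv σ u| ≤ C * h ^ 2 := by
  rcases le_or_gt 0 h with hh | hh
  · exact key_taylor_nonneg C hC σ hdiff hσ u h hh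
  · have := key_taylor_nonneg C hC σ hdiff hσ u (-h) (by linarith)
    have e : σ (u + -h) - σ (u - -h) - 2 * -h * deriv σ u
        = -(σ (u + h) - σ (u - h) - 2 * h * deriv σ u) := by
      have : u + -h = u - h := by ring
      rw [this]
      have : u - -h = u + h := by ring
      rw [this]; ring
    rw [e, abs_neg] at this
    calc |σ (u + h) - σ (u - h) - 2 * h * deriv σ u| ≤ C * (-h) ^ 2 := this
      _ = C * h ^ 2 := by ring

/-- the output of the symmetric two-layer network at the
constructed parameter `θ*` is within `bCD²/(2m)` of the linear model
`g₁(x) = Σ_r c_r^⊤x σ'(θ₁[r]^⊤x)`, when `σ'` is `C`-Lipschitz, `‖x‖=1`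
and `‖c_r‖ ≤ 2D/m` (here the width is `m = 2k`). -/
theorem stmt_10 {k p : ℕ} (m : ℕ) (hm : m = 2 * k) (b C D : ℝ)
    (hb : 0 < b) (hC : 0 ≤ C) (hD : 0 < D)
    (σ : ℝ → ℝ) (hdiff : ∀ z, DifferentiableAt ℝ σ z)
    (hσ : ∀ z z', |deriv σ z - deriv σ z'| ≤ C * |z - z'|)
    (a : Fin k → ℝ) (ha : ∀ r, a r = 1 ∨ a r = -1)
    (θ1 : Fin k → EuclideanSpace ℝ (Fin p))
    (c : Fin k → EuclideanSpace ℝ (Fin p))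
    (hc : ∀ r, ‖c r‖ ≤ 2 * D / m)
    (x : EuclideanSpace ℝ (Fin p)) (hx : ‖x‖ = 1) :
    |(1 / b) * ((∑ r, a r * σ ⟪θ1 r + ((b / 2) * a r) • c r, x⟫) -
        ∑ r, a r * σ ⟪θ1 r - ((b / 2) * a r) • c r, x⟫) -
      ∑ r, ⟪c r, x⟫ * deriv σ ⟪θ1 r, x⟫| ≤ b * C * D ^ 2 / (2 * m) := by
  rcases Nat.eq_zero_or_pos k with hk | hk
  · subst hk
    simp [hm]
  have hmpos : (0:ℝ) < m := by
    have : 0 < m := by omega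
    exact_mod_cast this
  set u : Fin k → ℝ := fun r => ⟪θ1 r, x⟫ with hu
  set v : Fin k → ℝ := fun r => ⟪c r, x⟫ with hv
  have hinner1 : ∀ r, ⟪θ1 r + ((b / 2) * a r) • c r, x⟫ = u r + (b / 2) * a r * v r := by
    intro r; rw [inner_add_left, real_inner_smul_left]
  have hinner2 : ∀ r, ⟪θ1 r - ((b / 2) * a r) • c r, x⟫ = u r - (b / 2) * a r * v r := by
    intro r; rw [inner_sub_left, real_inner_smul_left]
  have ha2 : ∀ r, a r * a r = 1 := by
    intro r; rcases ha r with h | h <;> rw [h] <;> ring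
  have ha1 : ∀ r, |a r| = 1 := by
    intro r; rcases ha r with h | h <;> rw [h] <;> simp
  have hrw : (1 / b) * ((∑ r, a r * σ ⟪θ1 r + ((b / 2) * a r) • c r, x⟫) -
        ∑ r, a r * σ ⟪θ1 r - ((b / 2) * a r) • c r, x⟫) -
      ∑ r, ⟪c r, x⟫ * deriv σ ⟪θ1 r, x⟫
      = ∑ r, (1 / b) * a r * (σ (u r + (b / 2) * a r * v r) - σ (u r - (b / 2) * a r * v r)
          - 2 * ((b / 2) * a r * v r) * deriv σ (u r)) := by
    simp only [hinner1, hinner2]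
    rw [← Finset.sum_sub_distrib, Finset.mul_sum, ← Finset.sum_sub_distrib]
    refine Finset.sum_congr rfl (fun r _ => ?_)
    have h2 := ha2 r
    have hvr : ⟪c r, x⟫ = v r := rfl
    have hur : ⟪θ1 r, x⟫ = u r := rfl
    rw [hvr, hur]
    have hb' : b ≠ 0 := hb.ne'
    field_simp
    linear_combination (b * v r * deriv σ (u r)) * h2
  rw [hrw]
  have hvb : ∀ r, |v r| ≤ 2 * D / m := by
    intro r
    calc |v r| ≤ ‖c r‖ * ‖x‖ := abs_real_inner_le_norm _ _
      _ = ‖c r‖ := by rw [hx, mul_one]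
      _ ≤ 2 * D / m := hc r
  have hterm : ∀ r, |(1 / b) * a r * (σ (u r + (b / 2) * a r * v r)
      - σ (u r - (b / 2) * a r * v r) - 2 * ((b / 2) * a r * v r) * deriv σ (u r))|
      ≤ (b * C / 4) * (2 * D / m) ^ 2 := by
    intro r
    rw [abs_mul, abs_mul, abs_div, abs_one, ha1 r, mul_one, abs_of_pos hb]
    have hkey := key_taylor C hC σ hdiff hσ (u r) ((b / 2) * a r * v r)
    have hsq : ((b / 2) * a r * v r) ^ 2 = (b ^ 2 / 4) * (v r) ^ 2 := by
      linear_combination (b ^ 2 / 4 * v r ^ 2) * ha2 r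
    rw [hsq] at hkey
    have hv2 : (v r) ^ 2 ≤ (2 * D / m) ^ 2 := by
      have := hvb r
      have := abs_nonneg (v r)
      nlinarith [hvb r, abs_nonneg (v r), sq_abs (v r)]
    calc 1 / b * |σ (u r + (b / 2) * a r * v r) - σ (u r - (b / 2) * a r * v r)
          - 2 * ((b / 2) * a r * v r) * deriv σ (u r)|
        ≤ 1 / b * (C * ((b ^ 2 / 4) * (v r) ^ 2)) := by
          apply mul_le_mul_of_nonneg_left hkey
          positivity
      _ = (b * C / 4) * (v r) ^ 2 := by field_simp
      _ ≤ (b * C / 4) * (2 * D / m) ^ 2 := by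
          apply mul_le_mul_of_nonneg_left hv2
          positivity
  calc |∑ r, (1 / b) * a r * (σ (u r + (b / 2) * a r * v r) - σ (u r - (b / 2) * a r * v r)
          - 2 * ((b / 2) * a r * v r) * deriv σ (u r))|
      ≤ ∑ r, |(1 / b) * a r * (σ (u r + (b / 2) * a r * v r) - σ (u r - (b / 2) * a r * v r)
          - 2 * ((b / 2) * a r * v r) * deriv σ (u r))| := Finset.abs_sum_le_sum_abs _ _
    _ ≤ ∑ _r : Fin k, (b * C / 4) * (2 * D / m) ^ 2 :=
        Finset.sum_le_sum (fun r _ => hterm r)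
    _ = k * ((b * C / 4) * (2 * D / m) ^ 2) := by
        rw [Finset.sum_const, Finset.card_univ, Fintype.card_fin, nsmul_eq_mul]
    _ = b * C * D ^ 2 / (2 * m) := by
        have hmk : (m : ℝ) = 2 * k := by exact_mod_cast hm
        rw [hmk] at *
        have hkpos : (0:ℝ) < k := by positivity
        field_simp
        ring
end
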